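/- arXiv:2110.15168 — 2 statements merged into one kernel-verified Lean document; each statement's English description precedes it below -/
import Mathlib

section
/- Let L ⊆ {-1,0,+1}^U be a COM and X ∈ L a covector. Then for every tope T of L, the sign vector X ∘ T is a tope of L lying in the face F(X) = {Y ∈ L : X ≤ Y}, and for every tope T' in F(X), the distance d(T, X∘T) ≤ d(T, T') where d denotes Hamming distance (i.e., X∘T is the gate of T in the topes of F(X)). -/
variable {U : Type*} [Fintype U] [DecidableEq U]

/-- Composition of sign vectors. -/
def sComp (X Y : U → SignType) : U → SignType :=
  fun e => if X e = 0 then Y e else X e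

/-- The sign-vector partial order. -/
def sLe (X Y : U → SignType) : Prop := ∀ e, X e = 0 ∨ X e = Y e

/-- A tope of a simple COM: a covector with full support (a `{-1,+1}`-vector in `L`). -/
def IsTope (L : Set (U → SignType)) (T : U → SignType) : Prop :=
  T ∈ L ∧ ∀ e, T e ≠ 0

/-- in a COM `L`, for every covector `X` and tope `T`, `X ∘ T` is a tope lying
in the face `F(X)`, and it is the gate of `T` in the topes of `F(X)`: for every tope
`T' ≥ X` one has `d(T, X∘T) ≤ d(T,T')`. -/
theorem comp_is_gate_in_face
    (L : Set (U → SignType))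
    (hSE : ∀ X ∈ L, ∀ Y ∈ L, ∀ e, X e * Y e = -1 →
      ∃ Z ∈ L, Z e = 0 ∧ ∀ f, X f * Y f ≠ -1 → Z f = sComp X Y f)
    (hFS : ∀ X ∈ L, ∀ Y ∈ L, sComp X (-Y) ∈ L)
    (X : U → SignType) (hX : X ∈ L)
    (T : U → SignType) (hT : IsTope L T) :
    IsTope L (sComp X T) ∧ sLe X (sComp X T) ∧
      ∀ T', IsTope L T' → sLe X T' →
        hammingDist T (sComp X T) ≤ hammingDist T T' := by
  have hmem : sComp X T ∈ L := by
    have h1 := hFS X hX T hT.1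
    have h2 := hFS X hX _ h1
    have heq : sComp X (-(sComp X (-T))) = sComp X T := by
      funext e
      simp only [sComp, Pi.neg_apply]
      by_cases h : X e = 0 <;> simp [h]
    rwa [heq] at h2
  refine ⟨⟨hmem, fun e => ?_⟩, fun e => ?_, fun T' hT' hle => ?_⟩
  · simp only [sComp]
    by_cases h : X e = 0 <;> simp [h, hT.2 e]
  · by_cases h : X e = 0
    · exact Or.inl h
    · exact Or.inr (by simp [sComp, h])
  · simp only [hammingDist]
    apply Finset.card_le_card
    intro e he
    simp only [Finset.mem_filter, Finset.mem_univ, true_and] at he ⊢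
    intro hcon
    apply he
    simp only [sComp]
    by_cases h : X e = 0
    · simp [h]
    · exfalso
      rcases hle e with h0 | heq
      · exact h h0
      · apply he
        simp only [sComp, if_neg h]
        rw [heq, ← hcon]
end

section
/- Let M = (U, L) be a COM, S ∈ {-1,0,+1}^U a realizable sample (S ≤ T for some tope T), and X ∈ L a covector with Sep(S,X) = ∅. Then the set of topes above X ∘ S equals the intersection of the set of topes above X with the set of topes above S, and this intersection is nonempty. -/
variable {U : Type*}

lemma comp_mem (L : Set (U → SignType))
    (hFS : ∀ X ∈ L, ∀ Y ∈ L, sComp X (-Y) ∈ L)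
    {X Y : U → SignType} (hX : X ∈ L) (hY : Y ∈ L) : sComp X Y ∈ L := by
  have h1 : sComp X (-Y) ∈ L := hFS X hX Y hY
  have h2 : sComp X (-(sComp X (-Y))) ∈ L := hFS X hX _ h1
  have : sComp X (-(sComp X (-Y))) = sComp X Y := by
    funext e
    simp only [sComp, Pi.neg_apply]
    by_cases h : X e = 0 <;> simp [h]
  rwa [this] at h2

/-- in a COM `M = (U, L)`, for a realizable sample `S` and a covector `X` with
`Sep(S,X) = ∅`, the set of topes above `X ∘ S` equals the intersection of the set of topes
above `X` with the set of topes above `S`, and this intersection is nonempty. -/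
theorem topes_above_comp_eq_inter
    (L : Set (U → SignType))
    (hSE : ∀ X ∈ L, ∀ Y ∈ L, ∀ e, X e * Y e = -1 →
      ∃ Z ∈ L, Z e = 0 ∧ ∀ f, X f * Y f ≠ -1 → Z f = sComp X Y f)
    (hFS : ∀ X ∈ L, ∀ Y ∈ L, sComp X (-Y) ∈ L)
    (S : U → SignType) (hS : ∃ T, IsTope L T ∧ sLe S T)
    (X : U → SignType) (hX : X ∈ L)
    (hSep : {e : U | S e * X e = -1} = ∅) :
    {T | IsTope L T ∧ sLe (sComp X S) T} =
      {T | IsTope L T ∧ sLe X T} ∩ {T | IsTope L T ∧ sLe S T} ∧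
    ({T | IsTope L T ∧ sLe X T} ∩ {T | IsTope L T ∧ sLe S T}).Nonempty := by
  have hsep : ∀ e, S e * X e ≠ -1 := by
    intro e he
    have : e ∈ ({e : U | S e * X e = -1} : Set U) := he
    rw [hSep] at this; exact this
  -- for each e with S e ≠ 0: X e = 0 ∨ X e = S e
  have key : ∀ e, S e ≠ 0 → (X e = 0 ∨ X e = S e) := by
    intro e hSe
    have := hsep e
    revert this hSe
    cases S e <;> cases X e <;> decide
  constructor
  · ext T
    simp only [Set.mem_setOf_eq, Set.mem_inter_iff]
    constructor
    · rintro ⟨hT, hle⟩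
      refine ⟨⟨hT, ?_⟩, hT, ?_⟩
      · intro e
        rcases hle e with h | h
        · simp only [sComp] at h
          by_cases hx : X e = 0
          · exact Or.inl hx
          · simp [hx] at h
        · simp only [sComp] at h
          by_cases hx : X e = 0
          · exact Or.inl hx
          · simp [hx] at h; exact Or.inr h
      · intro e
        by_cases hSe : S e = 0
        · exact Or.inl hSe
        · right
          have hcomp : sComp X S e = S e := by
            rcases key e hSe with h | h <;> simp [sComp, h]
          rcases hle e with h | h
          · rw [hcomp] at h; exact absurd h hSe
          · rw [hcomp] at h; exact h
    · rintro ⟨⟨hT, hXle⟩, _, hSle⟩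
      refine ⟨hT, ?_⟩
      intro e
      simp only [sComp]
      by_cases hx : X e = 0
      · simp only [hx, if_pos rfl]; exact hSle e
      · simp only [hx, if_neg hx]
        rcases hXle e with h | h
        · exact absurd h hx
        · exact Or.inr h
  · obtain ⟨T, ⟨hTL, hTfull⟩, hSleT⟩ := hS
    refine ⟨sComp X T, ⟨⟨comp_mem L hFS hX hTL, ?_⟩, ?_⟩, ⟨comp_mem L hFS hX hTL, ?_⟩, ?_⟩
    · intro e
      simp only [sComp]
      by_cases hx : X e = 0
      · simp [hx]; exact hTfull e
      · simp [hx]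
    · intro e
      simp only [sComp]
      by_cases hx : X e = 0 <;> simp [hx]
    · intro e
      simp only [sComp]
      by_cases hx : X e = 0
      · simp [hx]; exact hTfull e
      · simp [hx]
    · intro e
      by_cases hSe : S e = 0
      · exact Or.inl hSe
      · right
        have hTe : S e = T e := (hSleT e).resolve_left hSe
        simp only [sComp]
        rcases key e hSe with h | h
        · simp [h, hTe]
        · have hx0 : X e ≠ 0 := by rw [h]; exact hSe
          simp [hx0, h, hSe]
end
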